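/- arXiv:0805.0147 — 3 statements merged into one kernel-verified Lean document; each statement's English description precedes it below -/
import Mathlib

section
/- Darboux transformation for the Heisenberg equation: Let m: ℝ×ℝ → ℝ³ be a smooth solution of the Heisenberg ferromagnet equation with |m(t,x)| = 1 for all (t,x), and let Γ be the associated matrix. Let ν ∈ ℂ with ν ≠ 0, and let φ = (φ₁, φ₂): ℝ×ℝ → ℂ² be a smooth, nowhere-vanishing solution of the Lax pair at (Γ, ν). Set N = [[φ₁, −conj(φ₂)],[φ₂, conj(φ₁)]] (which is invertible since det N = |φ₁|² + |φ₂|² > 0), e^{iθ} = ν/|ν|, G = N · diag((ν−λ)/ν, (conj(ν)−λ)/conj(ν)) · N⁻¹, and Γ̂ = N · diag(e^{−iθ}, e^{iθ}) · N⁻¹ · Γ · N · diag(e^{iθ}, e^{−iθ}) · N⁻¹. Then for any λ ∈ ℂ and any smooth solution ψ: ℝ×ℝ → ℂ² of the Lax pair at (Γ, λ), the function ψ̂ = Gψ satisfies the Lax pair at (Γ̂, λ), i.e. ∂_x ψ̂ = iλ Γ̂ ψ̂ and ∂_t ψ̂ = −(λ/2)(4iλ Γ̂ + [Γ̂, ∂_x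 Γ̂]) ψ̂. -/
open Matrix

noncomputable section

/-- The matrix `Γ = [[m₃, m₁ − i m₂],[m₁ + i m₂, −m₃]]` associated to a map `m : ℝ×ℝ → ℝ³`. -/
def GammaOf (m : ℝ → ℝ → Fin 3 → ℝ) (t x : ℝ) : Matrix (Fin 2) (Fin 2) ℂ :=
  !![(m t x 2 : ℂ), (m t x 0 : ℂ) - Complex.I * (m t x 1 : ℂ);
     (m t x 0 : ℂ) + Complex.I * (m t x 1 : ℂ), -(m t x 2 : ℂ)]

/-- Entrywise partial derivative in the spatial variable of a matrix-valued function. -/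
def matDx (A : ℝ → ℝ → Matrix (Fin 2) (Fin 2) ℂ) (t x : ℝ) : Matrix (Fin 2) (Fin 2) ℂ :=
  Matrix.of fun i j => deriv (fun y => A t y i j) x

/-- `ψ` solves the Lax pair of the Heisenberg equation at `(A, λ)`:
`∂_x ψ = iλAψ` and `∂_t ψ = −(λ/2)(4iλA + [A, ∂_x A])ψ`. -/
def LaxPairSol (A : ℝ → ℝ → Matrix (Fin 2) (Fin 2) ℂ) (lam : ℂ)
    (ψ : ℝ → ℝ → Fin 2 → ℂ) : Prop :=
  (∀ t x, deriv (fun y => ψ t y) x = ((Complex.I * lam) • A t x).mulVec (ψ t x)) ∧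
  (∀ t x, deriv (fun s => ψ s x) t =
    ((-(lam / 2)) • ((4 * Complex.I * lam) • A t x +
      (A t x * matDx A t x - matDx A t x * A t x))).mulVec (ψ t x))

/-- Entrywise `HasDerivAt` for 2×2-matrix-valued functions of a real variable. -/
def HasMD (F : ℝ → Matrix (Fin 2) (Fin 2) ℂ) (F' : Matrix (Fin 2) (Fin 2) ℂ) (x : ℝ) : Prop :=
  ∀ i j, HasDerivAt (fun y => F y i j) (F' i j) x

namespace HasMD

theorem congr_fun {F G : ℝ → Matrix (Fin 2) (Fin 2) ℂ} {F' x} (h : HasMD F F' x)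
    (hFG : ∀ y, G y = F y) : HasMD G F' x := by
  intro i j
  have : (fun y => G y i j) = fun y => F y i j := by funext y; rw [hFG]
  rw [this]; exact h i j

theorem const (A : Matrix (Fin 2) (Fin 2) ℂ) (x : ℝ) : HasMD (fun _ => A) 0 x := by
  intro i j; simpa using hasDerivAt_const x (A i j)

theorem add {F G F' G' x} (hF : HasMD F F' x) (hG : HasMD G G' x) :
    HasMD (fun y => F y + G y) (F' + G') x := by
  intro i j; exact (hF i j).add (hG i j)

theorem smul (c : ℂ) {F F' x} (hF : HasMD F F' x) :
    HasMD (fun y => c • F y) (c • F') x := by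
  intro i j
  simpa [Matrix.smul_apply, smul_eq_mul] using (hF i j).const_mul c

theorem mul {F G F' G' x} (hF : HasMD F F' x) (hG : HasMD G G' x) :
    HasMD (fun y => F y * G y) (F' * G x + F x * G') x := by
  intro i j
  have h : HasDerivAt (fun y => F y i 0 * G y 0 j + F y i 1 * G y 1 j)
      ((F' i 0 * G x 0 j + F x i 0 * G' 0 j) + (F' i 1 * G x 1 j + F x i 1 * G' 1 j)) x :=
    ((hF i 0).mul (hG 0 j)).add ((hF i 1).mul (hG 1 j))
  have e1 : (fun y => (F y * G y) i j) = fun y => F y i 0 * G y 0 j + F y i 1 * G y 1 j := by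
    funext y; simp [Matrix.mul_apply, Fin.sum_univ_two]
  rw [e1]
  convert h using 1
  simp [Matrix.mul_apply, Matrix.add_apply, Fin.sum_univ_two]; ring

theorem inv {F F' x} (hF : HasMD F F' x) (hdet : (F x).det ≠ 0) :
    HasMD (fun y => (F y)⁻¹) (-((F x)⁻¹ * F' * (F x)⁻¹)) x := by
  have hd : HasDerivAt (fun y => (F y).det)
      (F' 0 0 * F x 1 1 + F x 0 0 * F' 1 1 - (F' 0 1 * F x 1 0 + F x 0 1 * F' 1 0)) x := by
    have h := ((hF 0 0).mul (hF 1 1)).sub ((hF 0 1).mul (hF 1 0))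
    have e : (fun y => (F y).det) = fun y => F y 0 0 * F y 1 1 - F y 0 1 * F y 1 0 := by
      funext y; simp [Matrix.det_fin_two]
    rw [e]; exact h
  have hdinv : HasDerivAt (fun y => ((F y).det)⁻¹)
      (-(F' 0 0 * F x 1 1 + F x 0 0 * F' 1 1 - (F' 0 1 * F x 1 0 + F x 0 1 * F' 1 0))
        / ((F x).det) ^ 2) x := by
    have h1 := hasFDerivAt_inv' (𝕜 := ℝ) (R := ℂ) hdet
    have h2 := h1.comp_hasDerivAt x hd
    refine h2.congr_deriv ?_
    simp only [ContinuousLinearMap.neg_apply, ContinuousLinearMap.mulLeftRight_apply]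
    field_simp
  intro i j
  have e1 : (fun y => (F y)⁻¹ i j) = fun y => ((F y).det)⁻¹ * (F y).adjugate i j := by
    funext y
    rw [Matrix.inv_def]
    simp [Ring.inverse_eq_inv', Matrix.smul_apply, smul_eq_mul]
  rw [e1]
  have hadj : HasDerivAt (fun y => (F y).adjugate i j)
      ((!![F' 1 1, -F' 0 1; -F' 1 0, F' 0 0] : Matrix (Fin 2) (Fin 2) ℂ) i j) x := by
    have e2 : (fun y => (F y).adjugate i j)
        = fun y => (!![F y 1 1, -(F y 0 1); -(F y 1 0), F y 0 0] : Matrix (Fin 2) (Fin 2) ℂ) i j := by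
      funext y; rw [Matrix.adjugate_fin_two]
    rw [e2]
    fin_cases i <;> fin_cases j <;> simp <;>
      first
        | exact hF 1 1
        | exact (hF 0 1).neg
        | exact (hF 1 0).neg
        | exact hF 0 0
  have h := hdinv.mul hadj
  refine h.congr_deriv ?_
  have hA : (F x)⁻¹ = ((F x).det)⁻¹ • !![F x 1 1, -(F x 0 1); -(F x 1 0), F x 0 0] := by
    rw [Matrix.inv_def, Ring.inverse_eq_inv', Matrix.adjugate_fin_two]
  have hdet2 : F x 0 0 * F x 1 1 - F x 0 1 * F x 1 0 ≠ 0 := by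
    rw [← Matrix.det_fin_two]; exact hdet
  rw [hA, Matrix.adjugate_fin_two]
  simp only [Matrix.det_fin_two, Matrix.smul_mul, Matrix.mul_smul, Matrix.neg_apply,
    Matrix.smul_apply, smul_eq_mul]
  fin_cases i <;> fin_cases j <;>
    · simp only [Matrix.mul_apply, Fin.sum_univ_two, Matrix.smul_apply, smul_eq_mul,
        Matrix.cons_val', Matrix.cons_val_zero, Matrix.cons_val_one, Matrix.head_cons,
        Matrix.head_fin_const, Matrix.empty_val', Matrix.cons_val_fin_one, Matrix.neg_apply]
      simp only [Fin.zero_eta, Fin.mk_one, Fin.isValue, Matrix.of_apply, Matrix.cons_val',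
        Matrix.cons_val_zero, Matrix.cons_val_one, Matrix.empty_val', Matrix.cons_val_fin_one]
      field_simp
      ring

end HasMD
abbrev M2 : Type := Matrix (Fin 2) (Fin 2) ℂ

def LamM (ν : ℂ) : M2 := !![ν, 0; 0, (starRingEnd ℂ) ν]
def LamiM (ν : ℂ) : M2 := !![ν⁻¹, 0; 0, ((starRingEnd ℂ) ν)⁻¹]

theorem starRingEnd_ne_zero {ν : ℂ} (hν : ν ≠ 0) : (starRingEnd ℂ) ν ≠ 0 := by
  simpa using hν

theorem LamM_mul_LamiM {ν : ℂ} (hν : ν ≠ 0) : LamM ν * LamiM ν = 1 := by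
  have h2 := starRingEnd_ne_zero hν
  ext i j
  fin_cases i <;> fin_cases j <;>
    simp [LamM, LamiM, Matrix.mul_apply, Fin.sum_univ_two, Matrix.one_apply,
      mul_inv_cancel₀, hν, h2]

theorem LamiM_mul_LamM {ν : ℂ} (hν : ν ≠ 0) : LamiM ν * LamM ν = 1 := by
  have h2 := starRingEnd_ne_zero hν
  ext i j
  fin_cases i <;> fin_cases j <;>
    simp [LamM, LamiM, Matrix.mul_apply, Fin.sum_univ_two, Matrix.one_apply,
      inv_mul_cancel₀, hν, h2]

theorem HasMD.sub {F G F' G' x} (hF : HasMD F F' x) (hG : HasMD G G' x) :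
    HasMD (fun y => F y - G y) (F' - G') x := by
  intro i j; exact (hF i j).sub (hG i j)

theorem hasMD_entries {f00 f01 f10 f11 : ℝ → ℂ} {g00 g01 g10 g11 : ℂ} {x : ℝ}
    (h00 : HasDerivAt f00 g00 x) (h01 : HasDerivAt f01 g01 x)
    (h10 : HasDerivAt f10 g10 x) (h11 : HasDerivAt f11 g11 x) :
    HasMD (fun y => !![f00 y, f01 y; f10 y, f11 y]) !![g00, g01; g10, g11] x := by
  intro i j
  fin_cases i <;> fin_cases j <;> simpa using ‹_›

theorem hasDerivAt_mulVec {A : ℝ → M2} {A' : M2} {v : ℝ → Fin 2 → ℂ} {v' : Fin 2 → ℂ} {x : ℝ}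
    (hA : HasMD A A' x) (hv : ∀ i, HasDerivAt (fun y => v y i) (v' i) x) :
    HasDerivAt (fun y => (A y).mulVec (v y)) (A'.mulVec (v x) + (A x).mulVec v') x := by
  rw [hasDerivAt_pi]
  intro i
  have h : HasDerivAt (fun y => A y i 0 * v y 0 + A y i 1 * v y 1)
      ((A' i 0 * v x 0 + A x i 0 * v' 0) + (A' i 1 * v x 1 + A x i 1 * v' 1)) x :=
    ((hA i 0).mul (hv 0)).add ((hA i 1).mul (hv 1))
  have e : (fun y => (A y).mulVec (v y) i) = fun y => A y i 0 * v y 0 + A y i 1 * v y 1 := by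
    funext y; simp [Matrix.mulVec, dotProduct, Fin.sum_univ_two]
  rw [e]
  refine h.congr_deriv ?_
  simp [Matrix.mulVec, dotProduct, Fin.sum_univ_two, Pi.add_apply]
  fin_cases i <;> simp <;> ring

theorem diffAt_slice_x {E : Type*} [NormedAddCommGroup E] [NormedSpace ℝ E] {f : ℝ → ℝ → E}
    (hf : ContDiff ℝ (⊤ : ℕ∞) (fun p : ℝ × ℝ => f p.1 p.2)) (t x : ℝ) :
    DifferentiableAt ℝ (fun y => f t y) x :=
  (((hf.differentiable (by simp)).comp
    ((differentiable_const t).prodMk differentiable_id))).differentiableAt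

theorem diffAt_slice_t {E : Type*} [NormedAddCommGroup E] [NormedSpace ℝ E] {f : ℝ → ℝ → E}
    (hf : ContDiff ℝ (⊤ : ℕ∞) (fun p : ℝ × ℝ => f p.1 p.2)) (t x : ℝ) :
    DifferentiableAt ℝ (fun s => f s x) t :=
  (((hf.differentiable (by simp)).comp
    (differentiable_id.prodMk (differentiable_const x)))).differentiableAt

theorem hasDerivAt_slice_x {ι : Type*} [Fintype ι] {E : Type*} [NormedAddCommGroup E]
    [NormedSpace ℝ E] {f : ℝ → ℝ → ι → E}
    (hf : ContDiff ℝ (⊤ : ℕ∞) (fun p : ℝ × ℝ => f p.1 p.2)) (t x : ℝ) (i : ι) :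
    HasDerivAt (fun y => f t y i) (deriv (fun y => f t y) x i) x :=
  hasDerivAt_pi.1 (diffAt_slice_x hf t x).hasDerivAt i

theorem hasDerivAt_slice_t {ι : Type*} [Fintype ι] {E : Type*} [NormedAddCommGroup E]
    [NormedSpace ℝ E] {f : ℝ → ℝ → ι → E}
    (hf : ContDiff ℝ (⊤ : ℕ∞) (fun p : ℝ × ℝ => f p.1 p.2)) (t x : ℝ) (i : ι) :
    HasDerivAt (fun s => f s x i) (deriv (fun s => f s x) t i) t :=
  hasDerivAt_pi.1 (diffAt_slice_t hf t x).hasDerivAt i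

theorem detN_ne {a c : ℂ} (h : ¬(a = 0 ∧ c = 0)) :
    (!![a, -(starRingEnd ℂ) c; c, (starRingEnd ℂ) a] : M2).det ≠ 0 := by
  rw [Matrix.det_fin_two_of]
  have e : a * (starRingEnd ℂ) a - -(starRingEnd ℂ) c * c
      = ((Complex.normSq a + Complex.normSq c : ℝ) : ℂ) := by
    push_cast [← Complex.mul_conj]; ring
  rw [e]
  simp only [Ne, Complex.ofReal_eq_zero]
  intro h0
  have ha := Complex.normSq_nonneg a
  have hc := Complex.normSq_nonneg c
  exact h ⟨Complex.normSq_eq_zero.1 (by linarith), Complex.normSq_eq_zero.1 (by linarith)⟩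
theorem G_eq {Nm : M2} (hNNi : Nm * Nm⁻¹ = 1) {ν : ℂ} (lam : ℂ) (hν : ν ≠ 0) :
    Nm * Matrix.diagonal ![(ν - lam) / ν, ((starRingEnd ℂ) ν - lam) / (starRingEnd ℂ) ν] * Nm⁻¹
      = 1 - lam • (Nm * LamiM ν * Nm⁻¹) := by
  have h2 := starRingEnd_ne_zero hν
  have e0 : (ν - lam) / ν = 1 - lam * ν⁻¹ := by field_simp
  have e1 : ((starRingEnd ℂ) ν - lam) / (starRingEnd ℂ) ν = 1 - lam * ((starRingEnd ℂ) ν)⁻¹ := by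
    field_simp
  have hD : Matrix.diagonal ![(ν - lam) / ν, ((starRingEnd ℂ) ν - lam) / (starRingEnd ℂ) ν]
      = 1 - lam • LamiM ν := by
    ext i j
    fin_cases i <;> fin_cases j <;>
      simp [LamiM, Matrix.diagonal_apply, Matrix.one_apply, e0, e1]
  rw [hD]
  simp only [mul_sub, sub_mul, mul_one, hNNi, Matrix.mul_smul, Matrix.smul_mul, mul_assoc]

theorem Ghat_eq {Nm Γ : M2} {ν u : ℂ} (hν : ν ≠ 0) (hu : u = ν / (‖ν‖ : ℂ)) :
    Nm * Matrix.diagonal ![(starRingEnd ℂ) u, u] * Nm⁻¹ * Γ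
        * (Nm * Matrix.diagonal ![u, (starRingEnd ℂ) u] * Nm⁻¹)
      = Nm * LamiM ν * Nm⁻¹ * Γ * (Nm * LamM ν * Nm⁻¹) := by
  have habs : (‖ν‖ : ℂ) ≠ 0 := by
    simpa [Complex.ofReal_eq_zero] using (norm_ne_zero_iff.2 hν)
  have e0 : (starRingEnd ℂ) u = (‖ν‖ : ℂ) * ν⁻¹ := by
    rw [hu, map_div₀, Complex.conj_ofReal, Complex.inv_def, Complex.normSq_eq_norm_sq]
    push_cast
    field_simp
    try ring
  have e1 : u = (‖ν‖ : ℂ)⁻¹ * ν := by rw [hu]; field_simp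
  have e2 : (starRingEnd ℂ) u = (‖ν‖ : ℂ)⁻¹ * (starRingEnd ℂ) ν := by
    rw [hu, map_div₀, Complex.conj_ofReal]; field_simp; try ring
  have h1 : Matrix.diagonal ![(starRingEnd ℂ) u, u] = (‖ν‖ : ℂ) • LamiM ν := by
    have e3 : u = (‖ν‖ : ℂ) * ((starRingEnd ℂ) ν)⁻¹ := by
      rw [hu, Complex.inv_def, Complex.normSq_eq_norm_sq]
      have : ((starRingEnd ℂ) ((starRingEnd ℂ) ν)) = ν := Complex.conj_conj ν
      rw [this]
      push_cast [Complex.norm_conj]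
      field_simp
      try ring
    ext i j
    fin_cases i <;> fin_cases j <;> simp [LamiM, Matrix.diagonal_apply, e0, e3]
  have h2 : Matrix.diagonal ![u, (starRingEnd ℂ) u] = ((‖ν‖ : ℂ))⁻¹ • LamM ν := by
    ext i j
    fin_cases i <;> fin_cases j <;> simp [LamM, Matrix.diagonal_apply, e1, e2]
  rw [h1, h2]
  simp only [Matrix.smul_mul, Matrix.mul_smul, smul_smul]
  rw [inv_mul_cancel₀ habs, one_smul]
theorem col_x {Γ : M2} (v : Fin 2 → ℂ) {p q r : ℂ} (ν : ℂ)
    (hΓ : Γ = !![p, q; r, -p]) (hp : (starRingEnd ℂ) p = p) (hq : (starRingEnd ℂ) q = r)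
    (hr : (starRingEnd ℂ) r = q) :
    (!![((Complex.I * ν) • Γ).mulVec v 0, -star (((Complex.I * ν) • Γ).mulVec v 1);
        ((Complex.I * ν) • Γ).mulVec v 1, star (((Complex.I * ν) • Γ).mulVec v 0)] : M2)
      = Complex.I • (Γ * !![v 0, -(starRingEnd ℂ) (v 1); v 1, (starRingEnd ℂ) (v 0)] * LamM ν) := by
  subst hΓ
  ext i j
  fin_cases i <;> fin_cases j <;>
    · simp [Matrix.mulVec, dotProduct, Fin.sum_univ_two, Matrix.mul_apply, LamM,
        ← starRingEnd_apply, _root_.map_mul, hp, hq, hr, Complex.conj_I]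
      ring

set_option maxHeartbeats 3200000 in
theorem col_t {Γ Γx : M2} (v : Fin 2 → ℂ) {p q r px qx rx : ℂ} (ν : ℂ)
    (hΓ : Γ = !![p, q; r, -p]) (hp : (starRingEnd ℂ) p = p) (hq : (starRingEnd ℂ) q = r)
    (hr : (starRingEnd ℂ) r = q)
    (hΓx : Γx = !![px, qx; rx, -px]) (hpx : (starRingEnd ℂ) px = px)
    (hqx : (starRingEnd ℂ) qx = rx) (hrx : (starRingEnd ℂ) rx = qx) :
    (!![((-(ν/2)) • ((4*Complex.I*ν) • Γ + (Γ*Γx - Γx*Γ))).mulVec v 0,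
        -star (((-(ν/2)) • ((4*Complex.I*ν) • Γ + (Γ*Γx - Γx*Γ))).mulVec v 1);
        ((-(ν/2)) • ((4*Complex.I*ν) • Γ + (Γ*Γx - Γx*Γ))).mulVec v 1,
        star (((-(ν/2)) • ((4*Complex.I*ν) • Γ + (Γ*Γx - Γx*Γ))).mulVec v 0)] : M2)
      = (-(2:ℂ)*Complex.I) • (Γ * !![v 0, -(starRingEnd ℂ) (v 1); v 1, (starRingEnd ℂ) (v 0)]
            * (LamM ν * LamM ν))
        + (-(1/2:ℂ)) • ((Γ*Γx - Γx*Γ)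
            * !![v 0, -(starRingEnd ℂ) (v 1); v 1, (starRingEnd ℂ) (v 0)] * LamM ν) := by
  subst hΓ hΓx
  ext i j
  fin_cases i <;> fin_cases j <;>
    · simp [Matrix.mulVec, dotProduct, Fin.sum_univ_two, Matrix.mul_apply, LamM,
        ← starRingEnd_apply, _root_.map_mul, map_div₀, map_ofNat, hp, hq, hr, hpx, hqx, hrx,
        Complex.conj_I]
      ring
theorem matDx_eq {A : ℝ → ℝ → M2} {F' : M2} {t x : ℝ} (h : HasMD (fun y => A t y) F' x) :
    matDx A t x = F' := by
  ext i j; exact (h i j).deriv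

set_option maxHeartbeats 4000000 in
/-- **Darboux transformation for the Heisenberg equation.** -/
theorem darboux_transformation
    (m : ℝ → ℝ → Fin 3 → ℝ)
    (hm_smooth : ContDiff ℝ (⊤ : ℕ∞) (fun p : ℝ × ℝ => m p.1 p.2))
    (hm_unit : ∀ t x, (m t x 0) ^ 2 + (m t x 1) ^ 2 + (m t x 2) ^ 2 = 1)
    (hm_heis : ∀ t x, deriv (fun s => m s x) t =
      -(crossProduct (m t x) (deriv (fun y => deriv (fun z => m t z) y) x)))
    (ν : ℂ) (hν : ν ≠ 0)
    (φ : ℝ → ℝ → Fin 2 → ℂ)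
    (hφ_smooth : ContDiff ℝ (⊤ : ℕ∞) (fun p : ℝ × ℝ => φ p.1 p.2))
    (hφ_nz : ∀ t x, φ t x ≠ 0)
    (hφ : LaxPairSol (GammaOf m) ν φ)
    (N : ℝ → ℝ → Matrix (Fin 2) (Fin 2) ℂ)
    (hN : ∀ t x, N t x = !![φ t x 0, -(starRingEnd ℂ) (φ t x 1);
                            φ t x 1, (starRingEnd ℂ) (φ t x 0)])
    (u : ℂ) (hu : u = ν / (‖ν‖ : ℂ))
    (lam : ℂ)
    (G : ℝ → ℝ → Matrix (Fin 2) (Fin 2) ℂ)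
    (hG : ∀ t x, G t x =
      N t x * Matrix.diagonal ![(ν - lam) / ν,
        ((starRingEnd ℂ) ν - lam) / (starRingEnd ℂ) ν] * (N t x)⁻¹)
    (Γhat : ℝ → ℝ → Matrix (Fin 2) (Fin 2) ℂ)
    (hΓhat : ∀ t x, Γhat t x =
      N t x * Matrix.diagonal ![(starRingEnd ℂ) u, u] * (N t x)⁻¹ * GammaOf m t x *
        (N t x * Matrix.diagonal ![u, (starRingEnd ℂ) u] * (N t x)⁻¹))
    (ψ : ℝ → ℝ → Fin 2 → ℂ)
    (hψ_smooth : ContDiff ℝ (⊤ : ℕ∞) (fun p : ℝ × ℝ => ψ p.1 p.2))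
    (hψ : LaxPairSol (GammaOf m) lam ψ) :
    LaxPairSol Γhat lam (fun t x => (G t x).mulVec (ψ t x)) := by
  have hcν : (starRingEnd ℂ) ν ≠ 0 := starRingEnd_ne_zero hν
  have hdet : ∀ t x, (N t x).det ≠ 0 := by
    intro t x
    rw [hN]
    apply detN_ne
    rintro ⟨h0, h1⟩
    apply hφ_nz t x
    funext i
    fin_cases i
    · exact h0
    · exact h1
  have hNNi : ∀ t x, N t x * (N t x)⁻¹ = 1 := fun t x =>
    Matrix.mul_nonsing_inv _ (isUnit_iff_ne_zero.2 (hdet t x))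
  have hNiN : ∀ t x, (N t x)⁻¹ * N t x = 1 := fun t x =>
    Matrix.nonsing_inv_mul _ (isUnit_iff_ne_zero.2 (hdet t x))
  have hGf : ∀ t x, G t x = 1 - lam • (N t x * LamiM ν * (N t x)⁻¹) := by
    intro t x; rw [hG]; exact G_eq (hNNi t x) lam hν
  have hΓf : ∀ t x, Γhat t x
      = N t x * LamiM ν * (N t x)⁻¹ * GammaOf m t x * (N t x * LamM ν * (N t x)⁻¹) := by
    intro t x; rw [hΓhat]; exact Ghat_eq hν hu
  have hΓs : ∀ t x, GammaOf m t x = !![(m t x 2 : ℂ), (m t x 0 : ℂ) - Complex.I * (m t x 1 : ℂ);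
      (m t x 0 : ℂ) + Complex.I * (m t x 1 : ℂ), -(m t x 2 : ℂ)] := fun _ _ => rfl
  have hps : ∀ t x, (starRingEnd ℂ) ((m t x 2 : ℂ)) = ((m t x 2 : ℂ)) :=
    fun t x => Complex.conj_ofReal _
  have hqs : ∀ t x, (starRingEnd ℂ) ((m t x 0 : ℂ) - Complex.I * (m t x 1 : ℂ))
      = (m t x 0 : ℂ) + Complex.I * (m t x 1 : ℂ) := by
    intro t x
    rw [map_sub, _root_.map_mul, Complex.conj_ofReal, Complex.conj_ofReal, Complex.conj_I]
    ring
  have hrs : ∀ t x, (starRingEnd ℂ) ((m t x 0 : ℂ) + Complex.I * (m t x 1 : ℂ))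
      = (m t x 0 : ℂ) - Complex.I * (m t x 1 : ℂ) := by
    intro t x
    rw [map_add, _root_.map_mul, Complex.conj_ofReal, Complex.conj_ofReal, Complex.conj_I]
    ring
  -- x-direction derivative of N, at any point (t, x)
  have hNd : ∀ t x, HasMD (fun y => N t y)
      (Complex.I • (GammaOf m t x * N t x * LamM ν)) x := by
    intro t x
    have hax : ∀ i, HasDerivAt (fun y => φ t y i)
        (((Complex.I * ν) • GammaOf m t x).mulVec (φ t x) i) x := by
      intro i
      have hd := (diffAt_slice_x hφ_smooth t x).hasDerivAt
      rw [hφ.1 t x] at hd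
      exact hasDerivAt_pi.1 hd i
    have h0 := hasMD_entries (hax 0) (((hax 1).star).neg) (hax 1) ((hax 0).star)
    have h1 : HasMD (fun y => N t y)
        (!![((Complex.I * ν) • GammaOf m t x).mulVec (φ t x) 0,
            -star (((Complex.I * ν) • GammaOf m t x).mulVec (φ t x) 1);
            ((Complex.I * ν) • GammaOf m t x).mulVec (φ t x) 1,
            star (((Complex.I * ν) • GammaOf m t x).mulVec (φ t x) 0)]) x :=
      h0.congr_fun (fun y => by rw [hN t y]; rfl)
    have hcol := col_x (Γ := GammaOf m t x) (φ t x) ν (hΓs t x) (hps t x) (hqs t x) (hrs t x)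
    rw [← hN t x] at hcol
    exact hcol ▸ h1
  constructor
  · -- spatial equation
    intro t x
    have hQd := ((hNd t x).mul (HasMD.const (LamiM ν) x)).mul ((hNd t x).inv (hdet t x))
    have hGd := ((HasMD.const (1 : M2) x).sub (HasMD.smul lam hQd)).congr_fun (fun y => hGf t y)
    have hψx : ∀ i, HasDerivAt (fun y => ψ t y i)
        (((Complex.I * lam) • GammaOf m t x).mulVec (ψ t x) i) x := by
      intro i
      have hd := (diffAt_slice_x hψ_smooth t x).hasDerivAt
      rw [hψ.1 t x] at hd
      exact hasDerivAt_pi.1 hd i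
    have hD := hasDerivAt_mulVec hGd hψx
    show deriv (fun y => (G t y).mulVec (ψ t y)) x
      = ((Complex.I * lam) • Γhat t x).mulVec ((G t x).mulVec (ψ t x))
    refine hD.deriv.trans ?_
    rw [Matrix.mulVec_mulVec, Matrix.mulVec_mulVec, ← Matrix.add_mulVec]
    refine congrArg (fun M : M2 => M.mulVec (ψ t x)) ?_
    rw [hGf t x, hΓf t x]
    have e1 : ∀ X : M2, N t x * ((N t x)⁻¹ * X) = X := fun X => by
      rw [← mul_assoc, hNNi t x, one_mul]
    have e2 : ∀ X : M2, (N t x)⁻¹ * (N t x * X) = X := fun X => by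
      rw [← mul_assoc, hNiN t x, one_mul]
    have e3 : ∀ X : M2, LamM ν * (LamiM ν * X) = X := fun X => by
      rw [← mul_assoc, LamM_mul_LamiM hν, one_mul]
    have e4 : ∀ X : M2, LamiM ν * (LamM ν * X) = X := fun X => by
      rw [← mul_assoc, LamiM_mul_LamM hν, one_mul]
    simp only [mul_sub, sub_mul, mul_add, add_mul, smul_mul_assoc, mul_smul_comm, smul_smul,
      mul_one, one_mul, mul_zero, zero_mul, add_zero, zero_add, zero_sub, sub_zero, mul_neg,
      neg_mul, smul_neg, neg_smul, neg_neg, smul_sub, smul_add, mul_assoc, e1, e2, e3, e4,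
      hNNi t x, hNiN t x, LamM_mul_LamiM hν, LamiM_mul_LamM hν]
    module
  · -- temporal equation
    intro t x
    have hΓ2 : GammaOf m t x * GammaOf m t x = 1 := by
      have hC := congrArg (fun r : ℝ => (r : ℂ)) (hm_unit t x)
      push_cast at hC
      ext i j
      fin_cases i <;> fin_cases j <;>
        · simp [GammaOf, Matrix.mul_apply, Fin.sum_univ_two, Matrix.one_apply]
          first
            | linear_combination hC - ((m t x 1 : ℂ)) ^ 2 * Complex.I_sq
            | ring
    -- concrete x-derivative of Γ
    have hdm : ∀ j, HasDerivAt (fun y => m t y j) (deriv (fun y => m t y) x j) x :=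
      fun j => hasDerivAt_slice_x hm_smooth t x j
    have hΓd : HasMD (fun y => GammaOf m t y)
        (!![(deriv (fun y => m t y) x 2 : ℂ),
            (deriv (fun y => m t y) x 0 : ℂ) - Complex.I * (deriv (fun y => m t y) x 1 : ℂ);
            (deriv (fun y => m t y) x 0 : ℂ) + Complex.I * (deriv (fun y => m t y) x 1 : ℂ),
            -(deriv (fun y => m t y) x 2 : ℂ)]) x := by
      have h00 := (hdm 2).ofReal_comp
      have h01 := ((hdm 0).ofReal_comp).sub (((hdm 1).ofReal_comp).const_mul Complex.I)
      have h10 := ((hdm 0).ofReal_comp).add (((hdm 1).ofReal_comp).const_mul Complex.I)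
      have h11 := ((hdm 2).ofReal_comp).neg
      exact hasMD_entries h00 h01 h10 h11
    have hΓxval : matDx (GammaOf m) t x
        = !![(deriv (fun y => m t y) x 2 : ℂ),
            (deriv (fun y => m t y) x 0 : ℂ) - Complex.I * (deriv (fun y => m t y) x 1 : ℂ);
            (deriv (fun y => m t y) x 0 : ℂ) + Complex.I * (deriv (fun y => m t y) x 1 : ℂ),
            -(deriv (fun y => m t y) x 2 : ℂ)] := matDx_eq hΓd
    have hpsx : (starRingEnd ℂ) ((deriv (fun y => m t y) x 2 : ℂ))
        = ((deriv (fun y => m t y) x 2 : ℂ)) := Complex.conj_ofReal _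
    have hqsx : (starRingEnd ℂ) ((deriv (fun y => m t y) x 0 : ℂ)
          - Complex.I * (deriv (fun y => m t y) x 1 : ℂ))
        = (deriv (fun y => m t y) x 0 : ℂ) + Complex.I * (deriv (fun y => m t y) x 1 : ℂ) := by
      rw [map_sub, _root_.map_mul, Complex.conj_ofReal, Complex.conj_ofReal, Complex.conj_I]
      ring
    have hrsx : (starRingEnd ℂ) ((deriv (fun y => m t y) x 0 : ℂ)
          + Complex.I * (deriv (fun y => m t y) x 1 : ℂ))
        = (deriv (fun y => m t y) x 0 : ℂ) - Complex.I * (deriv (fun y => m t y) x 1 : ℂ) := by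
      rw [map_add, _root_.map_mul, Complex.conj_ofReal, Complex.conj_ofReal, Complex.conj_I]
      ring
    -- t-direction derivative of N
    have hNdt : HasMD (fun s => N s x)
        ((-(2:ℂ) * Complex.I) • (GammaOf m t x * N t x * (LamM ν * LamM ν))
          + (-(1/2 : ℂ)) • ((GammaOf m t x * matDx (GammaOf m) t x
              - matDx (GammaOf m) t x * GammaOf m t x) * N t x * LamM ν)) t := by
      have hat : ∀ i, HasDerivAt (fun s => φ s x i)
          (((-(ν / 2)) • ((4 * Complex.I * ν) • GammaOf m t x +
            (GammaOf m t x * matDx (GammaOf m) t x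
              - matDx (GammaOf m) t x * GammaOf m t x))).mulVec (φ t x) i) t := by
        intro i
        have hd := (diffAt_slice_t hφ_smooth t x).hasDerivAt
        rw [hφ.2 t x] at hd
        exact hasDerivAt_pi.1 hd i
      have h0 := hasMD_entries (hat 0) (((hat 1).star).neg) (hat 1) ((hat 0).star)
      have h1 : HasMD (fun s => N s x) _ t := h0.congr_fun (fun s => by rw [hN s x]; rfl)
      have hcol := col_t (Γ := GammaOf m t x) (Γx := matDx (GammaOf m) t x) (φ t x) ν
        (hΓs t x) (hps t x) (hqs t x) (hrs t x) hΓxval hpsx hqsx hrsx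
      rw [← hN t x] at hcol
      exact hcol ▸ h1
    have hQdt := (hNdt.mul (HasMD.const (LamiM ν) t)).mul (hNdt.inv (hdet t x))
    have hGdt := ((HasMD.const (1 : M2) t).sub (HasMD.smul lam hQdt)).congr_fun
      (fun s => hGf s x)
    have hψt : ∀ i, HasDerivAt (fun s => ψ s x i)
        (((-(lam / 2)) • ((4 * Complex.I * lam) • GammaOf m t x +
          (GammaOf m t x * matDx (GammaOf m) t x
            - matDx (GammaOf m) t x * GammaOf m t x))).mulVec (ψ t x) i) t := by
      intro i
      have hd := (diffAt_slice_t hψ_smooth t x).hasDerivAt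
      rw [hψ.2 t x] at hd
      exact hasDerivAt_pi.1 hd i
    have hD := hasDerivAt_mulVec hGdt hψt
    -- x-derivative of Γhat
    have hQdx := ((hNd t x).mul (HasMD.const (LamiM ν) x)).mul ((hNd t x).inv (hdet t x))
    have hQivdx := ((hNd t x).mul (HasMD.const (LamM ν) x)).mul ((hNd t x).inv (hdet t x))
    have hΓhd := ((hQdx.mul hΓd).mul hQivdx).congr_fun (fun y => hΓf t y)
    have hΓhx := matDx_eq hΓhd
    show deriv (fun s => (G s x).mulVec (ψ s x)) t
      = ((-(lam / 2)) • ((4 * Complex.I * lam) • Γhat t x +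
          (Γhat t x * matDx Γhat t x - matDx Γhat t x * Γhat t x))).mulVec
        ((G t x).mulVec (ψ t x))
    refine hD.deriv.trans ?_
    rw [Matrix.mulVec_mulVec, Matrix.mulVec_mulVec, ← Matrix.add_mulVec]
    refine congrArg (fun M : M2 => M.mulVec (ψ t x)) ?_
    rw [hΓhx, hGf t x, hΓf t x]
    have e1 : ∀ X : M2, N t x * ((N t x)⁻¹ * X) = X := fun X => by
      rw [← mul_assoc, hNNi t x, one_mul]
    have e2 : ∀ X : M2, (N t x)⁻¹ * (N t x * X) = X := fun X => by
      rw [← mul_assoc, hNiN t x, one_mul]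
    have e3 : ∀ X : M2, LamM ν * (LamiM ν * X) = X := fun X => by
      rw [← mul_assoc, LamM_mul_LamiM hν, one_mul]
    have e4 : ∀ X : M2, LamiM ν * (LamM ν * X) = X := fun X => by
      rw [← mul_assoc, LamiM_mul_LamM hν, one_mul]
    have e5 : ∀ X : M2, GammaOf m t x * (GammaOf m t x * X) = X := fun X => by
      rw [← mul_assoc, hΓ2, one_mul]
    rw [← hΓxval]
    simp only [mul_sub, sub_mul, mul_add, add_mul, smul_mul_assoc, mul_smul_comm, smul_smul,
      mul_one, one_mul, mul_zero, zero_mul, add_zero, zero_add, zero_sub, sub_zero, mul_neg,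
      neg_mul, smul_neg, neg_smul, neg_neg, smul_sub, smul_add, mul_assoc, e1, e2, e3, e4, e5,
      hNNi t x, hNiN t x, LamM_mul_LamiM hν, LamiM_mul_LamM hν, hΓ2]
    module
end
end

section
/- Conservation of momentum for the Heisenberg equation: Let m = (m₁,m₂,m₃): ℝ×ℝ → ℝ³ be a smooth solution of ∂_t m = −m × ∂_x² m with |m(t,x)| = 1 and m₃(t,x) > −1 for all (t,x), and with m(t, x + 2π) = m(t, x) for all (t,x). Then the function t ↦ ∫₀^{2π} (m₁ ∂_x m₂ − m₂ ∂_x m₁)/(1 + m₃) dx is constant in t. -/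
open Matrix

noncomputable section

namespace HeisAux

noncomputable def pX (g : ℝ × ℝ → ℝ) : ℝ × ℝ → ℝ := fun p => fderiv ℝ g p (0, 1)
noncomputable def pT (g : ℝ × ℝ → ℝ) : ℝ × ℝ → ℝ := fun p => fderiv ℝ g p (1, 0)

lemma contDiff_fderiv {g : ℝ × ℝ → ℝ} (hg : ContDiff ℝ (⊤ : ℕ∞) g) :
    ContDiff ℝ (⊤ : ℕ∞) (fderiv ℝ g) := hg.fderiv_right (by simp)

lemma contDiff_pX {g : ℝ × ℝ → ℝ} (hg : ContDiff ℝ (⊤ : ℕ∞) g) : ContDiff ℝ (⊤ : ℕ∞) (pX g) :=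
  (contDiff_fderiv hg).clm_apply contDiff_const

lemma hasDerivAt_pX {g : ℝ × ℝ → ℝ} (hg : ContDiff ℝ (⊤ : ℕ∞) g) (t x : ℝ) :
    HasDerivAt (fun y => g (t, y)) (pX g (t, x)) x := by
  have h1 : HasFDerivAt g (fderiv ℝ g (t, x)) (t, x) :=
    (hg.differentiable (by simp) (t, x)).hasFDerivAt
  have h2 : HasDerivAt (fun y : ℝ => ((t, y) : ℝ × ℝ)) (((0 : ℝ), (1 : ℝ))) x :=
    (hasDerivAt_const x t).prodMk (hasDerivAt_id x)
  exact h1.comp_hasDerivAt x h2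

lemma hasDerivAt_pT {g : ℝ × ℝ → ℝ} (hg : ContDiff ℝ (⊤ : ℕ∞) g) (t x : ℝ) :
    HasDerivAt (fun s => g (s, x)) (pT g (t, x)) t := by
  have h1 : HasFDerivAt g (fderiv ℝ g (t, x)) (t, x) :=
    (hg.differentiable (by simp) (t, x)).hasFDerivAt
  have h2 : HasDerivAt (fun s : ℝ => ((s, x) : ℝ × ℝ)) (((1 : ℝ), (0 : ℝ))) t :=
    (hasDerivAt_id t).prodMk (hasDerivAt_const t x)
  exact h1.comp_hasDerivAt t h2

lemma clairaut {g : ℝ × ℝ → ℝ} (hg : ContDiff ℝ (⊤ : ℕ∞) g) (p : ℝ × ℝ) :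
    pT (pX g) p = pX (pT g) p := by
  have hdf : DifferentiableAt ℝ (fderiv ℝ g) p :=
    (contDiff_fderiv hg).differentiable (by simp) p
  have hX : HasFDerivAt (pX g)
      ((ContinuousLinearMap.apply ℝ ℝ (((0 : ℝ), (1 : ℝ)))).comp
        (fderiv ℝ (fderiv ℝ g) p)) p :=
    (ContinuousLinearMap.apply ℝ ℝ (((0 : ℝ), (1 : ℝ)))).hasFDerivAt.comp p hdf.hasFDerivAt
  have hT : HasFDerivAt (pT g)
      ((ContinuousLinearMap.apply ℝ ℝ (((1 : ℝ), (0 : ℝ)))).comp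
        (fderiv ℝ (fderiv ℝ g) p)) p :=
    (ContinuousLinearMap.apply ℝ ℝ (((1 : ℝ), (0 : ℝ)))).hasFDerivAt.comp p hdf.hasFDerivAt
  have hsymm : IsSymmSndFDerivAt ℝ g p :=
    hg.contDiffAt.isSymmSndFDerivAt (by rw [minSmoothness_of_isRCLikeNormedField]; exact WithTop.coe_le_coe.mpr (le_top : (2 : ℕ∞) ≤ ⊤))
  have e1 : pT (pX g) p = fderiv ℝ (fderiv ℝ g) p (1, 0) (0, 1) := by
    have := hX.fderiv
    simp only [pT, this]; rfl
  have e2 : pX (pT g) p = fderiv ℝ (fderiv ℝ g) p (0, 1) (1, 0) := by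
    have := hT.fderiv
    simp only [pX, this]; rfl
  rw [e1, e2, hsymm.eq]

lemma heis_key_alg (u0 u1 u2 v0 v1 v2 w0 w1 w2 z0 z1 z2 : ℝ)
    (hq : 1 + u2 ≠ 0)
    (hC0 : u0 ^ 2 + u1 ^ 2 + u2 ^ 2 = 1)
    (hC1 : u0 * v0 + u1 * v1 + u2 * v2 = 0)
    (hC2 : u0 * w0 + u1 * w1 + u2 * w2 + (v0 ^ 2 + v1 ^ 2 + v2 ^ 2) = 0)
    (hC3 : u0 * z0 + u1 * z1 + u2 * z2 + 3 * (v0 * w0 + v1 * w1 + v2 * w2) = 0) :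
    (((-(u1 * w2 - u2 * w1)) * v1 + u0 * (-(v2 * w0 + u2 * z0 - v0 * w2 - u0 * z2))
        - (-(u2 * w0 - u0 * w2)) * v0 - u1 * (-(v1 * w2 + u1 * z2 - v2 * w1 - u2 * z1)))
        * (1 + u2)
      - (u0 * v1 - u1 * v0) * (-(u0 * w1 - u1 * w0))) / (1 + u2) ^ 2
    = ((z2 + (3 * v2 * (v0 ^ 2 + v1 ^ 2 + v2 ^ 2)
          + (1 + 3 * u2) * (2 * (v0 * w0 + v1 * w1 + v2 * w2))) / 2) * (1 + u2)
        - (w2 + (1 + 3 * u2) * (v0 ^ 2 + v1 ^ 2 + v2 ^ 2) / 2) * v2) / (1 + u2) ^ 2 := by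
  rw [div_eq_div_iff (by positivity) (by positivity)]
  linear_combination ((z2 + v0 * w0 + v1 * w1 + u2 * z2) * hC0
    + (-(u0 * w0 + u1 * w1)) * hC1 + (-v2) * hC2 + (-(u2 + u2 ^ 2)) * hC3) * (1 + u2) ^ 2

end HeisAux

open HeisAux

/-- **Conservation of momentum for the Heisenberg equation.**
For a smooth solution `m = (m₁,m₂,m₃)` of `∂_t m = −m × ∂_x² m` with `|m| = 1`,
`m₃ > −1`, and `2π`-periodic in `x`, the momentum
`∫₀^{2π} (m₁ ∂_x m₂ − m₂ ∂_x m₁)/(1 + m₃) dx` is constant in `t`. -/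
theorem heisenberg_momentum_conserved
    (m : ℝ → ℝ → Fin 3 → ℝ)
    (hm_smooth : ContDiff ℝ (⊤ : ℕ∞) (fun p : ℝ × ℝ => m p.1 p.2))
    (hm_unit : ∀ t x, (m t x 0) ^ 2 + (m t x 1) ^ 2 + (m t x 2) ^ 2 = 1)
    (hm3 : ∀ t x, -1 < m t x 2)
    (hm_per : ∀ t x, m t (x + 2 * Real.pi) = m t x)
    (hm_heis : ∀ t x, deriv (fun s => m s x) t =
      -(crossProduct (m t x) (deriv (fun y => deriv (fun z => m t z) y) x))) :
    ∀ t₁ t₂ : ℝ,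
      (∫ x in (0:ℝ)..(2 * Real.pi),
        (m t₁ x 0 * deriv (fun y => m t₁ y 1) x - m t₁ x 1 * deriv (fun y => m t₁ y 0) x)
          / (1 + m t₁ x 2))
      = ∫ x in (0:ℝ)..(2 * Real.pi),
        (m t₂ x 0 * deriv (fun y => m t₂ y 1) x - m t₂ x 1 * deriv (fun y => m t₂ y 0) x)
          / (1 + m t₂ x 2) := by
  -- component functions and their spatial derivatives
  set U : Fin 3 → ℝ × ℝ → ℝ := fun i p => m p.1 p.2 i with hUdef
  set V : Fin 3 → ℝ × ℝ → ℝ := fun i => pX (U i) with hVdef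
  set W : Fin 3 → ℝ × ℝ → ℝ := fun i => pX (V i) with hWdef
  set Z : Fin 3 → ℝ × ℝ → ℝ := fun i => pX (W i) with hZdef
  have hU : ∀ i, ContDiff ℝ (⊤ : ℕ∞) (U i) := fun i => contDiff_pi.mp hm_smooth i
  have hV : ∀ i, ContDiff ℝ (⊤ : ℕ∞) (V i) := fun i => contDiff_pX (hU i)
  have hW : ∀ i, ContDiff ℝ (⊤ : ℕ∞) (W i) := fun i => contDiff_pX (hV i)
  have hZ : ∀ i, ContDiff ℝ (⊤ : ℕ∞) (Z i) := fun i => contDiff_pX (hW i)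
  have hUx : ∀ i t x, HasDerivAt (fun y => m t y i) (V i (t, x)) x := fun i t x =>
    hasDerivAt_pX (hU i) t x
  have hVx : ∀ i t x, HasDerivAt (fun y => V i (t, y)) (W i (t, x)) x := fun i t x =>
    hasDerivAt_pX (hV i) t x
  have hWx : ∀ i t x, HasDerivAt (fun y => W i (t, y)) (Z i (t, x)) x := fun i t x =>
    hasDerivAt_pX (hW i) t x
  have hderiv1 : ∀ i t x, deriv (fun y => m t y i) x = V i (t, x) := fun i t x =>
    (hUx i t x).deriv
  have hq : ∀ t x, (1 : ℝ) + m t x 2 ≠ 0 := fun t x => by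
    have := hm3 t x; intro h; linarith

  -- PDE componentwise
  have hpde : ∀ t x, (fun i => pT (U i) (t, x)) =
      -(crossProduct (m t x) (fun j => W j (t, x))) := by
    intro t x
    have h1 : HasDerivAt (fun s => m s x) (fun i => pT (U i) (t, x)) t :=
      hasDerivAt_pi.mpr (fun i => hasDerivAt_pT (hU i) t x)
    have h2 : (fun y => deriv (fun z => m t z) y) = fun y => (fun i => V i (t, y)) := by
      funext y
      exact (hasDerivAt_pi.mpr (fun i => hasDerivAt_pX (hU i) t y)).deriv
    have h3 : deriv (fun y => deriv (fun z => m t z) y) x = fun i => W i (t, x) := by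
      rw [h2]
      exact (hasDerivAt_pi.mpr (fun i => hasDerivAt_pX (hV i) t x)).deriv
    rw [← h1.deriv, hm_heis t x, h3]
  have hT0 : ∀ t x, pT (U 0) (t, x) =
      -(m t x 1 * W 2 (t, x) - m t x 2 * W 1 (t, x)) := by
    intro t x
    have := congrFun (hpde t x) 0
    simpa [cross_apply] using this
  have hT1 : ∀ t x, pT (U 1) (t, x) =
      -(m t x 2 * W 0 (t, x) - m t x 0 * W 2 (t, x)) := by
    intro t x
    have := congrFun (hpde t x) 1
    simpa [cross_apply] using this
  have hT2 : ∀ t x, pT (U 2) (t, x) =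
      -(m t x 0 * W 1 (t, x) - m t x 1 * W 0 (t, x)) := by
    intro t x
    have := congrFun (hpde t x) 2
    simpa [cross_apply] using this

  -- differentiated unit-norm constraints
  have hc1 : ∀ t x, m t x 0 * V 0 (t, x) + m t x 1 * V 1 (t, x) + m t x 2 * V 2 (t, x) = 0 := by
    intro t x
    have h : HasDerivAt (fun y => m t y 0 * m t y 0 + m t y 1 * m t y 1 + m t y 2 * m t y 2)
        ((V 0 (t, x) * m t x 0 + m t x 0 * V 0 (t, x))
          + (V 1 (t, x) * m t x 1 + m t x 1 * V 1 (t, x))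
          + (V 2 (t, x) * m t x 2 + m t x 2 * V 2 (t, x))) x :=
      (((hUx 0 t x).mul (hUx 0 t x)).add ((hUx 1 t x).mul (hUx 1 t x))).add
        ((hUx 2 t x).mul (hUx 2 t x))
    have hconst : (fun y => m t y 0 * m t y 0 + m t y 1 * m t y 1 + m t y 2 * m t y 2)
        = fun _ => (1 : ℝ) := by
      funext y
      have := hm_unit t y
      linear_combination this
    rw [hconst] at h
    have h0 := h.unique (hasDerivAt_const x 1)
    linarith
  have hc2 : ∀ t x, m t x 0 * W 0 (t, x) + m t x 1 * W 1 (t, x) + m t x 2 * W 2 (t, x)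
      + (V 0 (t, x) ^ 2 + V 1 (t, x) ^ 2 + V 2 (t, x) ^ 2) = 0 := by
    intro t x
    have h : HasDerivAt
        (fun y => m t y 0 * V 0 (t, y) + m t y 1 * V 1 (t, y) + m t y 2 * V 2 (t, y))
        ((V 0 (t, x) * V 0 (t, x) + m t x 0 * W 0 (t, x))
          + (V 1 (t, x) * V 1 (t, x) + m t x 1 * W 1 (t, x))
          + (V 2 (t, x) * V 2 (t, x) + m t x 2 * W 2 (t, x))) x :=
      (((hUx 0 t x).mul (hVx 0 t x)).add ((hUx 1 t x).mul (hVx 1 t x))).add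
        ((hUx 2 t x).mul (hVx 2 t x))
    have hconst : (fun y => m t y 0 * V 0 (t, y) + m t y 1 * V 1 (t, y) + m t y 2 * V 2 (t, y))
        = fun _ => (0 : ℝ) := funext fun y => hc1 t y
    rw [hconst] at h
    have h0 := h.unique (hasDerivAt_const x 0)
    linear_combination h0
  have hc3 : ∀ t x, m t x 0 * Z 0 (t, x) + m t x 1 * Z 1 (t, x) + m t x 2 * Z 2 (t, x)
      + 3 * (V 0 (t, x) * W 0 (t, x) + V 1 (t, x) * W 1 (t, x) + V 2 (t, x) * W 2 (t, x)) = 0 := by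
    intro t x
    have h : HasDerivAt
        (fun y => (m t y 0 * W 0 (t, y) + m t y 1 * W 1 (t, y) + m t y 2 * W 2 (t, y))
          + (V 0 (t, y) * V 0 (t, y) + V 1 (t, y) * V 1 (t, y) + V 2 (t, y) * V 2 (t, y)))
        (((V 0 (t, x) * W 0 (t, x) + m t x 0 * Z 0 (t, x))
            + (V 1 (t, x) * W 1 (t, x) + m t x 1 * Z 1 (t, x))
            + (V 2 (t, x) * W 2 (t, x) + m t x 2 * Z 2 (t, x)))
          + ((W 0 (t, x) * V 0 (t, x) + V 0 (t, x) * W 0 (t, x))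
            + (W 1 (t, x) * V 1 (t, x) + V 1 (t, x) * W 1 (t, x))
            + (W 2 (t, x) * V 2 (t, x) + V 2 (t, x) * W 2 (t, x)))) x :=
      ((((hUx 0 t x).mul (hWx 0 t x)).add ((hUx 1 t x).mul (hWx 1 t x))).add
        ((hUx 2 t x).mul (hWx 2 t x))).add
        ((((hVx 0 t x).mul (hVx 0 t x)).add ((hVx 1 t x).mul (hVx 1 t x))).add
          ((hVx 2 t x).mul (hVx 2 t x)))
    have hconst : (fun y => (m t y 0 * W 0 (t, y) + m t y 1 * W 1 (t, y) + m t y 2 * W 2 (t, y))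
          + (V 0 (t, y) * V 0 (t, y) + V 1 (t, y) * V 1 (t, y) + V 2 (t, y) * V 2 (t, y)))
        = fun _ => (0 : ℝ) := by
      funext y
      have := hc2 t y
      linear_combination this
    rw [hconst] at h
    have h0 := h.unique (hasDerivAt_const x 0)
    linear_combination h0

  -- time derivatives of V 0, V 1 via Clairaut + PDE
  have hVt0 : ∀ t x, pT (V 0) (t, x)
      = -(V 1 (t, x) * W 2 (t, x) + m t x 1 * Z 2 (t, x)
          - (V 2 (t, x) * W 1 (t, x) + m t x 2 * Z 1 (t, x))) := by
    intro t x
    have e1 : pT (V 0) (t, x) = pX (pT (U 0)) (t, x) := clairaut (hU 0) (t, x)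
    have e2 : pT (U 0) = fun p : ℝ × ℝ => -(U 1 p * W 2 p - U 2 p * W 1 p) :=
      funext fun p => hT0 p.1 p.2
    rw [e1, e2]
    have hsm : ContDiff ℝ (⊤ : ℕ∞) (fun p : ℝ × ℝ => -(U 1 p * W 2 p - U 2 p * W 1 p)) :=
      (((hU 1).mul (hW 2)).sub ((hU 2).mul (hW 1))).neg
    have h1 := hasDerivAt_pX hsm t x
    have h2 : HasDerivAt (fun y => -(U 1 (t, y) * W 2 (t, y) - U 2 (t, y) * W 1 (t, y)))
        (-(V 1 (t, x) * W 2 (t, x) + m t x 1 * Z 2 (t, x)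
          - (V 2 (t, x) * W 1 (t, x) + m t x 2 * Z 1 (t, x)))) x :=
      (((hUx 1 t x).mul (hWx 2 t x)).sub ((hUx 2 t x).mul (hWx 1 t x))).neg
    exact h1.unique h2
  have hVt1 : ∀ t x, pT (V 1) (t, x)
      = -(V 2 (t, x) * W 0 (t, x) + m t x 2 * Z 0 (t, x)
          - (V 0 (t, x) * W 2 (t, x) + m t x 0 * Z 2 (t, x))) := by
    intro t x
    have e1 : pT (V 1) (t, x) = pX (pT (U 1)) (t, x) := clairaut (hU 1) (t, x)
    have e2 : pT (U 1) = fun p : ℝ × ℝ => -(U 2 p * W 0 p - U 0 p * W 2 p) :=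
      funext fun p => hT1 p.1 p.2
    rw [e1, e2]
    have hsm : ContDiff ℝ (⊤ : ℕ∞) (fun p : ℝ × ℝ => -(U 2 p * W 0 p - U 0 p * W 2 p)) :=
      (((hU 2).mul (hW 0)).sub ((hU 0).mul (hW 2))).neg
    have h1 := hasDerivAt_pX hsm t x
    have h2 : HasDerivAt (fun y => -(U 2 (t, y) * W 0 (t, y) - U 0 (t, y) * W 2 (t, y)))
        (-(V 2 (t, x) * W 0 (t, x) + m t x 2 * Z 0 (t, x)
          - (V 0 (t, x) * W 2 (t, x) + m t x 0 * Z 2 (t, x)))) x :=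
      (((hUx 2 t x).mul (hWx 0 t x)).sub ((hUx 0 t x).mul (hWx 2 t x))).neg
    exact h1.unique h2

  -- named density functions
  set CD : ℝ × ℝ → ℝ := fun p =>
    (((-(U 1 p * W 2 p - U 2 p * W 1 p)) * V 1 p + U 0 p * (-(V 2 p * W 0 p + U 2 p * Z 0 p - V 0 p * W 2 p - U 0 p * Z 2 p)) - (-(U 2 p * W 0 p - U 0 p * W 2 p)) * V 0 p - U 1 p * (-(V 1 p * W 2 p + U 1 p * Z 2 p - V 2 p * W 1 p - U 2 p * Z 1 p))) * (1 + U 2 p) - (U 0 p * V 1 p - U 1 p * V 0 p) * (-(U 0 p * W 1 p - U 1 p * W 0 p))) / (1 + U 2 p) ^ 2 with hCDdef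
  set CE : ℝ × ℝ → ℝ := fun p =>
    ((Z 2 p + (3 * V 2 p * (V 0 p ^ 2 + V 1 p ^ 2 + V 2 p ^ 2) + (1 + 3 * U 2 p) * (2 * (V 0 p * W 0 p + V 1 p * W 1 p + V 2 p * W 2 p))) / 2) * (1 + U 2 p) - (W 2 p + (1 + 3 * U 2 p) * (V 0 p ^ 2 + V 1 p ^ 2 + V 2 p ^ 2) / 2) * V 2 p) / (1 + U 2 p) ^ 2 with hCEdef
  have hqp : ∀ p : ℝ × ℝ, (1 : ℝ) + U 2 p ≠ 0 := fun p => hq p.1 p.2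
  have hDE : ∀ p : ℝ × ℝ, CD p = CE p := by
    intro p
    rw [hCDdef, hCEdef]
    exact heis_key_alg (m p.1 p.2 0) (m p.1 p.2 1) (m p.1 p.2 2)
      (V 0 p) (V 1 p) (V 2 p) (W 0 p) (W 1 p) (W 2 p) (Z 0 p) (Z 1 p) (Z 2 p)
      (hq p.1 p.2) (hm_unit p.1 p.2) (hc1 p.1 p.2) (hc2 p.1 p.2) (hc3 p.1 p.2)
  have hCDcont : Continuous CD := by
    rw [hCDdef]
    have h0 := (hU 0).continuous
    have h1 := (hU 1).continuous
    have h2 := (hU 2).continuous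
    have k0 := (hV 0).continuous
    have k1 := (hV 1).continuous
    have k2 := (hV 2).continuous
    have l0 := (hW 0).continuous
    have l1 := (hW 1).continuous
    have l2 := (hW 2).continuous
    have n0 := (hZ 0).continuous
    have n1 := (hZ 1).continuous
    have n2 := (hZ 2).continuous
    apply Continuous.div
    · fun_prop
    · fun_prop
    · intro p
      exact pow_ne_zero 2 (hqp p)
  have hCEcont : Continuous CE := by
    rw [hCEdef]
    have h2 := (hU 2).continuous
    have k0 := (hV 0).continuous
    have k1 := (hV 1).continuous
    have k2 := (hV 2).continuous
    have l0 := (hW 0).continuous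
    have l1 := (hW 1).continuous
    have l2 := (hW 2).continuous
    have n2 := (hZ 2).continuous
    apply Continuous.div
    · fun_prop
    · fun_prop
    · intro p
      exact pow_ne_zero 2 (hqp p)

  -- time derivative of the momentum density
  have hDt : ∀ t x, HasDerivAt
      (fun s => (m s x 0 * V 1 (s, x) - m s x 1 * V 0 (s, x)) / (1 + m s x 2))
      (CD (t, x)) t := by
    intro t x
    have hn : HasDerivAt (fun s => m s x 0 * V 1 (s, x) - m s x 1 * V 0 (s, x))
        (pT (U 0) (t, x) * V 1 (t, x) + m t x 0 * pT (V 1) (t, x)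
          - (pT (U 1) (t, x) * V 0 (t, x) + m t x 1 * pT (V 0) (t, x))) t :=
      ((hasDerivAt_pT (hU 0) t x).mul (hasDerivAt_pT (hV 1) t x)).sub
        ((hasDerivAt_pT (hU 1) t x).mul (hasDerivAt_pT (hV 0) t x))
    have hd : HasDerivAt (fun s => (1 : ℝ) + m s x 2) (pT (U 2) (t, x)) t := by
      exact (hasDerivAt_pT (hU 2) t x).const_add 1
    have h := hn.div hd (hq t x)
    convert h using 1
    case e'_4 => rfl
    case e'_5 => rfl
    case e'_8 => rfl
    rw [hCDdef]
    simp only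
    rw [hT0 t x, hT1 t x, hT2 t x, hVt0 t x, hVt1 t x]
    ring

  -- the flux function
  set Ffun : ℝ → ℝ → ℝ := fun t y =>
    (W 2 (t, y) + (1 + 3 * m t y 2) * ((V 0 (t, y) ^ 2 + V 1 (t, y) ^ 2 + V 2 (t, y) ^ 2) / 2))
      / (1 + m t y 2) with hFdef
  have hFx : ∀ t x, HasDerivAt (fun y => Ffun t y) (CE (t, x)) x := by
    intro t x
    have h13 : HasDerivAt (fun y => (1 : ℝ) + 3 * m t y 2) (3 * V 2 (t, x)) x := by
      exact ((hUx 2 t x).const_mul 3).const_add 1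
    have hEE : HasDerivAt (fun y => V 0 (t, y) ^ 2 + V 1 (t, y) ^ 2 + V 2 (t, y) ^ 2)
        (((2 : ℕ) * V 0 (t, x) ^ 1 * W 0 (t, x) + (2 : ℕ) * V 1 (t, x) ^ 1 * W 1 (t, x))
          + (2 : ℕ) * V 2 (t, x) ^ 1 * W 2 (t, x)) x :=
      (((hVx 0 t x).pow 2).add ((hVx 1 t x).pow 2)).add ((hVx 2 t x).pow 2)
    have hG : HasDerivAt
        (fun y => W 2 (t, y)
          + (1 + 3 * m t y 2) * ((V 0 (t, y) ^ 2 + V 1 (t, y) ^ 2 + V 2 (t, y) ^ 2) / 2))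
        (Z 2 (t, x) + (3 * V 2 (t, x)
            * ((V 0 (t, x) ^ 2 + V 1 (t, x) ^ 2 + V 2 (t, x) ^ 2) / 2)
          + (1 + 3 * m t x 2) * ((((2 : ℕ) * V 0 (t, x) ^ 1 * W 0 (t, x)
            + (2 : ℕ) * V 1 (t, x) ^ 1 * W 1 (t, x))
            + (2 : ℕ) * V 2 (t, x) ^ 1 * W 2 (t, x)) / 2))) x :=
      (hWx 2 t x).add (h13.mul (hEE.div_const 2))
    have hden : HasDerivAt (fun y => (1 : ℝ) + m t y 2) (V 2 (t, x)) x := by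
      exact (hUx 2 t x).const_add 1
    have h := hG.div hden (hq t x)
    rw [hFdef]
    simp only
    convert h using 1
    case e'_4 => rfl
    case e'_5 => rfl
    case e'_8 => rfl
    rw [hCEdef]
    simp only
    push_cast
    ring
  -- periodicity of spatial derivatives
  have hUper : ∀ (i : Fin 3) t x, m t (x + 2 * Real.pi) i = m t x i := fun i t x =>
    congrFun (hm_per t x) i
  have hVper : ∀ (i : Fin 3) t x, V i (t, x + 2 * Real.pi) = V i (t, x) := by
    intro i t x
    have hfun : (fun y => m t (y + 2 * Real.pi) i) = fun y => m t y i :=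
      funext fun y => hUper i t y
    have h1 : V i (t, x + 2 * Real.pi) = deriv (fun y => m t y i) (x + 2 * Real.pi) :=
      (hderiv1 i t (x + 2 * Real.pi)).symm
    rw [h1, ← deriv_comp_add_const (f := fun y => m t y i) (a := 2 * Real.pi), hfun,
      hderiv1 i t x]
  have hWper : ∀ (i : Fin 3) t x, W i (t, x + 2 * Real.pi) = W i (t, x) := by
    intro i t x
    have hfun : (fun y => V i (t, y + 2 * Real.pi)) = fun y => V i (t, y) :=
      funext fun y => hVper i t y
    have h1 : W i (t, x + 2 * Real.pi) = deriv (fun y => V i (t, y)) (x + 2 * Real.pi) :=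
      ((hVx i t (x + 2 * Real.pi)).deriv).symm
    rw [h1, ← deriv_comp_add_const (f := fun y => V i (t, y)) (a := 2 * Real.pi), hfun,
      (hVx i t x).deriv]
  -- the flux integral vanishes
  have hIzero : ∀ t, (∫ x in (0:ℝ)..(2 * Real.pi), CE (t, x)) = 0 := by
    intro t
    have hcont : Continuous (fun x => CE (t, x)) :=
      hCEcont.comp (continuous_const.prodMk continuous_id)
    have hint : IntervalIntegrable (fun x => CE (t, x)) MeasureTheory.volume 0 (2 * Real.pi) :=
      hcont.intervalIntegrable 0 (2 * Real.pi)
    rw [intervalIntegral.integral_eq_sub_of_hasDerivAt (fun x _ => hFx t x) hint]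
    have e : Ffun t (2 * Real.pi) = Ffun t 0 := by
      rw [show (2 * Real.pi : ℝ) = 0 + 2 * Real.pi by ring, hFdef]
      simp only
      rw [hUper 2 t 0, hVper 0 t 0, hVper 1 t 0, hVper 2 t 0, hWper 2 t 0]
    rw [e, sub_self]

  -- momentum as a function of time
  set P : ℝ → ℝ := fun t => ∫ x in (0:ℝ)..(2 * Real.pi),
    (m t x 0 * V 1 (t, x) - m t x 1 * V 0 (t, x)) / (1 + m t x 2) with hPdef
  have hFc : Continuous (fun p : ℝ × ℝ => (U 0 p * V 1 p - U 1 p * V 0 p) / (1 + U 2 p)) := by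
    have h0 := (hU 0).continuous
    have h1 := (hU 1).continuous
    have h2 := (hU 2).continuous
    have k0 := (hV 0).continuous
    have k1 := (hV 1).continuous
    apply Continuous.div
    · fun_prop
    · fun_prop
    · exact hqp
  have hPderiv : ∀ t₀ : ℝ, HasDerivAt P 0 t₀ := by
    intro t₀
    have hKcomp : IsCompact ((Set.Icc (t₀ - 1) (t₀ + 1)) ×ˢ (Set.Icc (0:ℝ) (2 * Real.pi))) :=
      isCompact_Icc.prod isCompact_Icc
    obtain ⟨M, hM⟩ := hKcomp.exists_bound_of_continuousOn hCDcont.continuousOn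
    have hsub : Set.uIoc (0:ℝ) (2 * Real.pi) ⊆ Set.Icc (0:ℝ) (2 * Real.pi) := by
      rw [Set.uIoc_of_le (by positivity)]
      exact Set.Ioc_subset_Icc_self
    have hmeas : ∀ᶠ s in nhds t₀, MeasureTheory.AEStronglyMeasurable
        (fun x => (m s x 0 * V 1 (s, x) - m s x 1 * V 0 (s, x)) / (1 + m s x 2))
        (MeasureTheory.volume.restrict (Set.uIoc (0:ℝ) (2 * Real.pi))) :=
      Filter.Eventually.of_forall fun s =>
        ((hFc.comp (continuous_const.prodMk continuous_id)).aestronglyMeasurable).restrict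
    have hint : IntervalIntegrable
        (fun x => (m t₀ x 0 * V 1 (t₀, x) - m t₀ x 1 * V 0 (t₀, x)) / (1 + m t₀ x 2))
        MeasureTheory.volume 0 (2 * Real.pi) :=
      (hFc.comp (continuous_const.prodMk continuous_id)).intervalIntegrable 0 (2 * Real.pi)
    have h'meas : MeasureTheory.AEStronglyMeasurable (fun x => CD (t₀, x))
        (MeasureTheory.volume.restrict (Set.uIoc (0:ℝ) (2 * Real.pi))) :=
      ((hCDcont.comp (continuous_const.prodMk continuous_id)).aestronglyMeasurable).restrict
    have hbound : ∀ᵐ x ∂MeasureTheory.volume, x ∈ Set.uIoc (0:ℝ) (2 * Real.pi) →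
        ∀ s ∈ Metric.ball t₀ 1, ‖CD (s, x)‖ ≤ M := by
      refine Filter.Eventually.of_forall fun x hx s hs => ?_
      apply hM
      constructor
      · have : |s - t₀| < 1 := by simpa [Real.dist_eq] using hs
        constructor <;> [linarith [abs_lt.mp this |>.1]; linarith [abs_lt.mp this |>.2]]
      · exact hsub hx
    have hdiff : ∀ᵐ x ∂MeasureTheory.volume, x ∈ Set.uIoc (0:ℝ) (2 * Real.pi) →
        ∀ s ∈ Metric.ball t₀ 1, HasDerivAt
          (fun s' => (m s' x 0 * V 1 (s', x) - m s' x 1 * V 0 (s', x)) / (1 + m s' x 2))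
          (CD (s, x)) s :=
      Filter.Eventually.of_forall fun x _ s _ => hDt s x
    obtain ⟨-, hHD⟩ := intervalIntegral.hasDerivAt_integral_of_dominated_loc_of_deriv_le
      (F := fun s x => (m s x 0 * V 1 (s, x) - m s x 1 * V 0 (s, x)) / (1 + m s x 2))
      (F' := fun s x => CD (s, x)) (bound := fun _ => M) (Metric.ball_mem_nhds t₀ one_pos) hmeas hint h'meas hbound
      intervalIntegrable_const hdiff
    have hval : (∫ x in (0:ℝ)..(2 * Real.pi), CD (t₀, x)) = 0 := by
      rw [intervalIntegral.integral_congr (g := fun x => CE (t₀, x))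
        (fun x _ => hDE (t₀, x))]
      exact hIzero t₀
    rw [hval] at hHD
    exact hHD
  have hPconst : ∀ t₁ t₂ : ℝ, P t₁ = P t₂ := fun t₁ t₂ =>
    is_const_of_deriv_eq_zero (fun t => (hPderiv t).differentiableAt)
      (fun t => (hPderiv t).deriv) t₁ t₂
  intro t₁ t₂
  have hrepr : ∀ t : ℝ, (∫ x in (0:ℝ)..(2 * Real.pi),
      (m t x 0 * deriv (fun y => m t y 1) x - m t x 1 * deriv (fun y => m t y 0) x)
        / (1 + m t x 2)) = P t := fun t =>
    intervalIntegral.integral_congr fun x _ => by rw [hderiv1 1 t x, hderiv1 0 t x]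
  rw [hrepr t₁, hrepr t₂]
  exact hPconst t₁ t₂
end
end

section
/- Modulational instability of the domain wall: Let ξ, k ∈ ℝ with 0 < k < ξ, and set Ω = k√(ξ² − k²) > 0. Define m₁(t,x) = 0, m₂(t,x) = √(ξ² − k²) · e^{Ωt} cos(kx), m₃(t,x) = k · e^{Ωt} cos(kx). Then (m₁, m₂, m₃) is an exponentially growing solution of the linearization of the Heisenberg equation at the domain wall of winding number ξ, namely: ∂_t m₁ = 0, ∂_t m₂ = ∂_x² m₃ + ξ² m₃, and ∂_t m₃ = −∂_x² m₂ − 2ξ ∂_x m₁. -/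
/-!
The perturbation separates as `e^{Ωt} cos kx`: differentiating in `t` multiplies it by `Ω`,
and differentiating twice in `x` multiplies it by `-k²`. The linearized system thus reduces
to the algebraic relations `Ω √(ξ² − k²) = k (ξ² − k²)` and `Ω k = k² √(ξ² − k²)`, both
immediate from `Ω = k √(ξ² − k²)` and `√(ξ² − k²)² = ξ² − k²`, which needs `k < ξ`.
-/

theorem deriv_mul_exp_mul (A Ω C t : ℝ) :
    deriv (fun s => A * Real.exp (Ω * s) * C) t = Ω * (A * Real.exp (Ω * t) * C) := by
  have h := ((((hasDerivAt_id' t).const_mul Ω).exp).const_mul A).mul_const C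
  rw [h.deriv]
  ring

theorem deriv_mul_cos_mul (A k : ℝ) :
    deriv (fun z => A * Real.cos (k * z)) = fun y => -(A * k) * Real.sin (k * y) := by
  funext y
  have h := (((hasDerivAt_id' y).const_mul k).cos).const_mul A
  rw [h.deriv]
  ring

theorem deriv_deriv_mul_cos_mul (A k x : ℝ) :
    deriv (fun y => deriv (fun z => A * Real.cos (k * z)) y) x =
      -(k ^ 2 * (A * Real.cos (k * x))) := by
  have h := (((hasDerivAt_id' x).const_mul k).sin).const_mul (-(A * k))
  simp only [deriv_mul_cos_mul]
  rw [h.deriv]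
  ring

/-- **Modulational instability of the domain wall.**
For `0 < k < ξ` and `Ω = k√(ξ² − k²)`, the triple
`m₁ = 0`, `m₂ = √(ξ²−k²) e^{Ωt} cos kx`, `m₃ = k e^{Ωt} cos kx`
is an exponentially growing (`Ω > 0`) solution of the linearization of the Heisenberg
equation at the domain wall of winding number `ξ`:
`∂_t m₁ = 0`, `∂_t m₂ = ∂_x² m₃ + ξ² m₃`, `∂_t m₃ = −∂_x² m₂ − 2ξ ∂_x m₁`. -/
theorem domain_wall_modulational_instability
    (ξ k : ℝ) (hk : 0 < k) (hkξ : k < ξ)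
    (Ω : ℝ) (hΩ : Ω = k * Real.sqrt (ξ ^ 2 - k ^ 2))
    (m₁ m₂ m₃ : ℝ → ℝ → ℝ)
    (hm₁ : ∀ t x, m₁ t x = 0)
    (hm₂ : ∀ t x, m₂ t x = Real.sqrt (ξ ^ 2 - k ^ 2) * Real.exp (Ω * t) * Real.cos (k * x))
    (hm₃ : ∀ t x, m₃ t x = k * Real.exp (Ω * t) * Real.cos (k * x)) :
    0 < Ω ∧
    (∀ t x : ℝ, deriv (fun s => m₁ s x) t = 0) ∧
    (∀ t x : ℝ, deriv (fun s => m₂ s x) t =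
      deriv (fun y => deriv (fun z => m₃ t z) y) x + ξ ^ 2 * m₃ t x) ∧
    (∀ t x : ℝ, deriv (fun s => m₃ s x) t =
      -(deriv (fun y => deriv (fun z => m₂ t z) y) x) - 2 * ξ * deriv (fun y => m₁ t y) x) := by
  have hgap : 0 < ξ ^ 2 - k ^ 2 := by nlinarith
  have hsq : Real.sqrt (ξ ^ 2 - k ^ 2) ^ 2 = ξ ^ 2 - k ^ 2 := Real.sq_sqrt hgap.le
  refine ⟨hΩ ▸ by positivity, fun t x => ?_, fun t x => ?_, fun t x => ?_⟩
  · simp only [hm₁, deriv_const]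
  · simp only [hm₂, hm₃, deriv_mul_exp_mul, deriv_deriv_mul_cos_mul]
    linear_combination Real.sqrt (ξ ^ 2 - k ^ 2) * Real.exp (Ω * t) * Real.cos (k * x) * hΩ
      + k * Real.exp (Ω * t) * Real.cos (k * x) * hsq
  · simp only [hm₁, hm₂, hm₃, deriv_mul_exp_mul, deriv_deriv_mul_cos_mul, deriv_const]
    linear_combination k * Real.exp (Ω * t) * Real.cos (k * x) * hΩ
end
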